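/- arXiv:2510.17763 — 3 statements merged into one kernel-verified Lean document; each statement's English description precedes it below -/
import Mathlib

section
/- For ω > 0, the matrix operator H(ω) annihilates Y_{1,ω} and Y_{3,ω}, and satisfies H(ω)Y_{2,ω} = i·Y_{1,ω} and H(ω)Y_{4,ω} = -2i·Y_{3,ω}, where Y_{1,ω}=(iφ_ω,-iφ_ω)ᵀ, Y_{2,ω}=(∂_ω φ_ω, ∂_ω φ_ω)ᵀ, Y_{3,ω}=(φ_ω',φ_ω')ᵀ, Y_{4,ω}=(ixφ_ω,-ixφ_ω)ᵀ. -/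
noncomputable def phi (ω : ℝ) (x : ℝ) : ℝ :=
  Real.sqrt (2 * ω) * (1 / Real.cosh (Real.sqrt ω * x))

lemma key1 (ω s c A B : ℝ) (hB : B ≠ 0) (hs : s^2 = ω) (hc : c^2 = 2*ω) (hB2 : B^2 = A^2+1) :
    ω * (c/B) - (c/B)^3 =
    (-(c*(s*(s*B)))*B^2 - -(c*(s*A))*(2*B*(s*A)))/(B^2)^2 := by
  field_simp
  linear_combination (c*B^2 - 2*c*A^2)*hs + (-c)*hc + (2*c*ω)*hB2

noncomputable def p1 (ω x : ℝ) : ℝ :=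
  -(Real.sqrt (2*ω) * (Real.sqrt ω * Real.sinh (Real.sqrt ω * x))) / Real.cosh (Real.sqrt ω * x) ^ 2

lemma hasDerivAt_cosh_aux (s x : ℝ) :
    HasDerivAt (fun y => Real.cosh (s*y)) (s * Real.sinh (s*x)) x := by
  have := (Real.hasDerivAt_cosh (s*x)).comp x ((hasDerivAt_id x).const_mul s)
  simpa [Function.comp_def, mul_comm] using this

lemma hasDerivAt_sinh_aux (s x : ℝ) :
    HasDerivAt (fun y => Real.sinh (s*y)) (s * Real.cosh (s*x)) x := by
  have := (Real.hasDerivAt_sinh (s*x)).comp x ((hasDerivAt_id x).const_mul s)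
  simpa [Function.comp_def, mul_comm] using this

lemma hasDerivAt_phi (ω : ℝ) (x : ℝ) : HasDerivAt (phi ω) (p1 ω x) x := by
  have hB : Real.cosh (Real.sqrt ω * x) ≠ 0 := (Real.cosh_pos _).ne'
  have h := (hasDerivAt_const x (Real.sqrt (2*ω))).fun_div (hasDerivAt_cosh_aux (Real.sqrt ω) x) hB
  have heq : phi ω = fun y => Real.sqrt (2*ω) / Real.cosh (Real.sqrt ω * y) := by
    funext y; rw [phi, mul_one_div]
  rw [heq]
  refine h.congr_deriv ?_
  rw [p1]; ring

lemma hasDerivAt_p1 (ω : ℝ) (hω : 0 < ω) (x : ℝ) :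
    HasDerivAt (p1 ω) (ω * phi ω x - (phi ω x)^3) x := by
  set s := Real.sqrt ω with hsdef
  set c := Real.sqrt (2*ω) with hcdef
  have hB : Real.cosh (s*x) ≠ 0 := (Real.cosh_pos _).ne'
  have hs : s^2 = ω := Real.sq_sqrt hω.le
  have hc : c^2 = 2*ω := Real.sq_sqrt (by linarith)
  have hnum : HasDerivAt (fun y => -(c * (s * Real.sinh (s*y))))
      (-(c * (s * (s * Real.cosh (s*x))))) x := by
    simpa using (((hasDerivAt_sinh_aux s x).const_mul s).const_mul c).fun_neg
  have hden : HasDerivAt (fun y => Real.cosh (s*y)^2)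
      (2 * Real.cosh (s*x) * (s * Real.sinh (s*x))) x := by
    have := (hasDerivAt_cosh_aux s x).fun_pow 2
    simpa [mul_comm, mul_assoc, mul_left_comm] using this
  have h := hnum.fun_div hden (pow_ne_zero 2 hB)
  have hfun : p1 ω = fun y => -(c * (s * Real.sinh (s*y))) / Real.cosh (s*y)^2 := rfl
  rw [hfun]
  refine h.congr_deriv ?_
  have hB2 : Real.cosh (s*x)^2 = Real.sinh (s*x)^2 + 1 := Real.cosh_sq _
  rw [phi, mul_one_div]
  exact (key1 ω s c _ _ hB hs hc hB2).symm

lemma key2 (ω s c A B x : ℝ) (hω : 0 < ω) (hs0 : s ≠ 0) (hc0 : c ≠ 0) (hB : B ≠ 0)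
    (hs : s^2 = ω) (hc : c^2 = 2*ω) :
    (c * (1/B) + x * (-(c*(s*A))/B^2)) / (2*ω) =
    1/(2*c)*(2*1) * (1/B) + c * (-(A*(1/(2*s)*x))/B^2) := by
  have hω0 : ω ≠ 0 := hω.ne'
  field_simp
  linear_combination (-c^2*x*A)*hs + (s*B)*hc

lemma hasDerivAt_chi (ω : ℝ) (hω : 0 < ω) (x : ℝ) :
    HasDerivAt (fun w => phi w x) ((phi ω x + x * p1 ω x) / (2*ω)) ω := by
  have h2ω : (0:ℝ) < 2*ω := by linarith
  have hB : Real.cosh (Real.sqrt ω * x) ≠ 0 := (Real.cosh_pos _).ne'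
  have h1 : HasDerivAt (fun w : ℝ => Real.sqrt (2*w)) (1/(2*Real.sqrt (2*ω)) * (2*1)) ω :=
    (Real.hasDerivAt_sqrt h2ω.ne').comp ω ((hasDerivAt_id ω).const_mul 2)
  have hin : HasDerivAt (fun w : ℝ => Real.sqrt w * x) (1/(2*Real.sqrt ω) * x) ω :=
    (Real.hasDerivAt_sqrt hω.ne').mul_const x
  have h2 : HasDerivAt (fun w : ℝ => Real.cosh (Real.sqrt w * x))
      (Real.sinh (Real.sqrt ω * x) * (1/(2*Real.sqrt ω) * x)) ω :=
    (Real.hasDerivAt_cosh _).comp ω hin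
  have h3 : HasDerivAt (fun w : ℝ => 1 / Real.cosh (Real.sqrt w * x))
      (-(Real.sinh (Real.sqrt ω * x) * (1/(2*Real.sqrt ω) * x)) / Real.cosh (Real.sqrt ω * x)^2) ω := by
    simpa [one_div] using h2.fun_inv hB
  have h := h1.fun_mul h3
  have hfun : (fun w => phi w x) = fun w : ℝ => Real.sqrt (2*w) * (1 / Real.cosh (Real.sqrt w * x)) := rfl
  rw [hfun]
  refine h.congr_deriv ?_
  rw [phi, p1]
  exact (key2 ω (Real.sqrt ω) (Real.sqrt (2*ω)) _ _ x hω (Real.sqrt_pos.2 hω).ne'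
    (Real.sqrt_pos.2 h2ω).ne' hB (Real.sq_sqrt hω.le) (Real.sq_sqrt h2ω.le)).symm

lemma deriv_lift (f f' : ℝ → ℝ) (a : ℂ) (h : ∀ x, HasDerivAt f (f' x) x) :
    deriv (fun x => a * ((f x : ℝ) : ℂ)) = fun x => a * ((f' x : ℝ) : ℂ) :=
  funext fun x => (((h x).ofReal_comp).const_mul a).deriv

lemma deriv_lift0 (f f' : ℝ → ℝ) (h : ∀ x, HasDerivAt f (f' x) x) :
    deriv (fun x => ((f x : ℝ) : ℂ)) = fun x => ((f' x : ℝ) : ℂ) :=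
  funext fun x => ((h x).ofReal_comp).deriv

/-- The linearized matrix operator H(ω), acting componentwise on F = (f₁,f₂)ᵀ. -/
noncomputable def Hop (ω : ℝ) (F : (ℝ → ℂ) × (ℝ → ℂ)) : (ℝ → ℂ) × (ℝ → ℂ) :=
  (fun x => -(deriv (deriv F.1) x) + (ω : ℂ) * F.1 x
      - 2 * ((phi ω x) ^ 2 : ℝ) * F.1 x - ((phi ω x) ^ 2 : ℝ) * F.2 x,
   fun x => deriv (deriv F.2) x - (ω : ℂ) * F.2 x
      + ((phi ω x) ^ 2 : ℝ) * F.1 x + 2 * ((phi ω x) ^ 2 : ℝ) * F.2 x)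

noncomputable def Y1 (ω : ℝ) : (ℝ → ℂ) × (ℝ → ℂ) :=
  (fun x => Complex.I * (phi ω x : ℂ), fun x => -Complex.I * (phi ω x : ℂ))

noncomputable def Y2 (ω : ℝ) : (ℝ → ℂ) × (ℝ → ℂ) :=
  (fun x => ((deriv (fun w => phi w x) ω : ℝ) : ℂ),
   fun x => ((deriv (fun w => phi w x) ω : ℝ) : ℂ))

noncomputable def Y3 (ω : ℝ) : (ℝ → ℂ) × (ℝ → ℂ) :=
  (fun x => ((deriv (phi ω) x : ℝ) : ℂ), fun x => ((deriv (phi ω) x : ℝ) : ℂ))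

noncomputable def Y4 (ω : ℝ) : (ℝ → ℂ) × (ℝ → ℂ) :=
  (fun x => Complex.I * (x : ℂ) * (phi ω x : ℂ),
   fun x => -Complex.I * (x : ℂ) * (phi ω x : ℂ))

/-- Action of H(ω) on the generalized kernel:
H(ω)Y₁ = 0, H(ω)Y₂ = iY₁, H(ω)Y₃ = 0, H(ω)Y₄ = -2iY₃. -/
theorem Hop_generalized_kernel (ω : ℝ) (hω : 0 < ω) :
    (∀ x : ℝ, (Hop ω (Y1 ω)).1 x = 0 ∧ (Hop ω (Y1 ω)).2 x = 0) ∧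
    (∀ x : ℝ, (Hop ω (Y2 ω)).1 x = Complex.I * (Y1 ω).1 x ∧
              (Hop ω (Y2 ω)).2 x = Complex.I * (Y1 ω).2 x) ∧
    (∀ x : ℝ, (Hop ω (Y3 ω)).1 x = 0 ∧ (Hop ω (Y3 ω)).2 x = 0) ∧
    (∀ x : ℝ, (Hop ω (Y4 ω)).1 x = -2 * Complex.I * (Y3 ω).1 x ∧
              (Hop ω (Y4 ω)).2 x = -2 * Complex.I * (Y3 ω).2 x) := by
  have hp1 : ∀ x, HasDerivAt (phi ω) (p1 ω x) x := hasDerivAt_phi ω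
  have hp2 : ∀ x, HasDerivAt (p1 ω) (ω * phi ω x - phi ω x ^ 3) x := hasDerivAt_p1 ω hω
  have hp3 : ∀ x : ℝ, HasDerivAt (fun y => ω * phi ω y - phi ω y ^ 3)
      (ω * p1 ω x - 3 * phi ω x ^ 2 * p1 ω x) x := by
    intro x
    have := ((hp1 x).const_mul ω).fun_sub ((hp1 x).fun_pow 3)
    exact this.congr_deriv (by norm_num)
  have d1I := deriv_lift (phi ω) (p1 ω) Complex.I hp1
  have d2I := deriv_lift (p1 ω) (fun y => ω * phi ω y - phi ω y ^ 3) Complex.I hp2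
  have d1nI := deriv_lift (phi ω) (p1 ω) (-Complex.I) hp1
  have d2nI := deriv_lift (p1 ω) (fun y => ω * phi ω y - phi ω y ^ 3) (-Complex.I) hp2
  refine ⟨?_, ?_, ?_, ?_⟩
  · -- Y1
    intro x
    constructor
    · simp only [Hop, Y1]
      rw [d1I, d2I]
      push_cast; ring
    · simp only [Hop, Y1]
      rw [d1nI, d2nI]
      push_cast; ring
  · -- Y2
    intro x
    have hchi : ∀ y : ℝ, deriv (fun w => phi w y) ω = (phi ω y + y * p1 ω y) / (2*ω) :=
      fun y => (hasDerivAt_chi ω hω y).deriv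
    have hq1 : ∀ x : ℝ, HasDerivAt (fun y => (phi ω y + y * p1 ω y) / (2*ω))
        ((p1 ω x + (1 * p1 ω x + x * (ω * phi ω x - phi ω x ^ 3))) / (2*ω)) x :=
      fun x => ((hp1 x).add ((hasDerivAt_id x).mul (hp2 x))).div_const _
    have hq2 : ∀ x : ℝ, HasDerivAt
        (fun y => (p1 ω y + (1 * p1 ω y + y * (ω * phi ω y - phi ω y ^ 3))) / (2*ω))
        (((ω * phi ω x - phi ω x ^ 3) + (1 * (ω * phi ω x - phi ω x ^ 3) +
          (1 * (ω * phi ω x - phi ω x ^ 3) + x * (ω * p1 ω x - 3 * phi ω x ^ 2 * p1 ω x)))) / (2*ω)) x :=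
      fun x => ((hp2 x).add (((hp2 x).const_mul 1).add
        ((hasDerivAt_id x).mul (hp3 x)))).div_const _
    have e1 := deriv_lift0 _ _ hq1
    have e2 := deriv_lift0 _ _ hq2
    have hωC : (ω : ℂ) ≠ 0 := Complex.ofReal_ne_zero.mpr hω.ne'
    constructor
    · simp only [Hop, Y2, Y1]
      simp only [hchi]
      rw [e1, e2]
      have hI : Complex.I * (Complex.I * ((phi ω x : ℝ) : ℂ)) = -((phi ω x : ℝ) : ℂ) := by
        rw [← mul_assoc, Complex.I_mul_I]; ring
      rw [hI]
      push_cast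
      field_simp
      ring
    · simp only [Hop, Y2, Y1]
      simp only [hchi]
      rw [e1, e2]
      have hI : Complex.I * (-Complex.I * ((phi ω x : ℝ) : ℂ)) = ((phi ω x : ℝ) : ℂ) := by
        rw [neg_mul, mul_neg, ← mul_assoc, Complex.I_mul_I]; ring
      rw [hI]
      push_cast
      field_simp
      ring
  · -- Y3
    intro x
    have hd : deriv (phi ω) = p1 ω := funext fun y => (hp1 y).deriv
    have f1 := deriv_lift0 (p1 ω) (fun y => ω * phi ω y - phi ω y ^ 3) hp2
    have f2 := deriv_lift0 (fun y => ω * phi ω y - phi ω y ^ 3)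
      (fun y => ω * p1 ω y - 3 * phi ω y ^ 2 * p1 ω y) hp3
    constructor
    · simp only [Hop, Y3, hd]
      rw [f1, f2]
      push_cast; ring
    · simp only [Hop, Y3, hd]
      rw [f1, f2]
      push_cast; ring
  · -- Y4
    intro x
    have hY4a : (fun x : ℝ => Complex.I * (x : ℂ) * ((phi ω x : ℝ) : ℂ))
        = fun x : ℝ => Complex.I * (((x * phi ω x : ℝ) : ℝ) : ℂ) := by
      funext y; push_cast; ring
    have hY4b : (fun x : ℝ => -Complex.I * (x : ℂ) * ((phi ω x : ℝ) : ℂ))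
        = fun x : ℝ => -Complex.I * (((x * phi ω x : ℝ) : ℝ) : ℂ) := by
      funext y; push_cast; ring
    have hu1 : ∀ x : ℝ, HasDerivAt (fun y => y * phi ω y) (1 * phi ω x + x * p1 ω x) x :=
      fun x => (hasDerivAt_id x).mul (hp1 x)
    have hu2 : ∀ x : ℝ, HasDerivAt (fun y => 1 * phi ω y + y * p1 ω y)
        (1 * p1 ω x + (1 * p1 ω x + x * (ω * phi ω x - phi ω x ^ 3))) x :=
      fun x => ((hp1 x).const_mul 1).add ((hasDerivAt_id x).mul (hp2 x))
    have g1I := deriv_lift _ _ Complex.I hu1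
    have g2I := deriv_lift _ _ Complex.I hu2
    have g1nI := deriv_lift _ _ (-Complex.I) hu1
    have g2nI := deriv_lift _ _ (-Complex.I) hu2
    have hd : deriv (phi ω) = p1 ω := funext fun y => (hp1 y).deriv
    constructor
    · simp only [Hop, Y4, Y3, hd]
      rw [hY4a, g1I, g2I]
      push_cast; ring
    · simp only [Hop, Y4, Y3, hd]
      rw [hY4b, g1nI, g2nI]
      push_cast; ring
end

section
/- For ω > 0, the bounded vector functions Φ_{+,ω}(x) = (1/√(2π))(tanh²(√ω x), -sech²(√ω x))ᵀ and Φ_{-,ω}(x) = (1/√(2π))(-sech²(√ω x), tanh²(√ω x))ᵀ satisfy H(ω)Φ_{+,ω} = ω·Φ_{+,ω} and H(ω)Φ_{-,ω} = -ω·Φ_{-,ω} pointwise, and neither belongs to L²(ℝ)×L²(ℝ). -/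
open MeasureTheory

/-- Threshold resonance function Φ_{+,ω}. -/
noncomputable def PhiPlus (ω : ℝ) : (ℝ → ℂ) × (ℝ → ℂ) :=
  (fun x => (((1 / Real.sqrt (2 * Real.pi)) * (Real.tanh (Real.sqrt ω * x)) ^ 2 : ℝ) : ℂ),
   fun x => ((-(1 / Real.sqrt (2 * Real.pi)) * (1 / Real.cosh (Real.sqrt ω * x)) ^ 2 : ℝ) : ℂ))

/-- Threshold resonance function Φ_{-,ω}. -/
noncomputable def PhiMinus (ω : ℝ) : (ℝ → ℂ) × (ℝ → ℂ) :=
  (fun x => ((-(1 / Real.sqrt (2 * Real.pi)) * (1 / Real.cosh (Real.sqrt ω * x)) ^ 2 : ℝ) : ℂ),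
   fun x => (((1 / Real.sqrt (2 * Real.pi)) * (Real.tanh (Real.sqrt ω * x)) ^ 2 : ℝ) : ℂ))

lemma cosh_ne (y : ℝ) : Real.cosh y ≠ 0 := (Real.cosh_pos y).ne'

lemma hd_tanh_sq (s x : ℝ) : HasDerivAt (fun x => Real.tanh (s*x)^2)
    (2*s*Real.sinh (s*x)/Real.cosh (s*x)^3) x := by
  have hlin : HasDerivAt (fun x : ℝ => s * x) s x := by
    simpa using (hasDerivAt_id x).const_mul s
  have hsinh := (Real.hasDerivAt_sinh (s*x)).comp x hlin
  have hcosh := (Real.hasDerivAt_cosh (s*x)).comp x hlin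
  have hv := cosh_ne (s*x)
  have ht : HasDerivAt (fun x => Real.tanh (s*x))
      ((Real.cosh (s*x)*s*Real.cosh (s*x) - Real.sinh (s*x)*(Real.sinh (s*x)*s))/Real.cosh (s*x)^2) x := by
    simp only [Real.tanh_eq_sinh_div_cosh]
    exact hsinh.div hcosh hv
  have := ht.pow 2
  refine this.congr_deriv ?_
  have hid := Real.cosh_sq_sub_sinh_sq (s*x)
  simp only [Real.tanh_eq_sinh_div_cosh, show (2:ℕ) - 1 = 1 from rfl, pow_one, Nat.cast_ofNat]
  field_simp
  linear_combination (s*Real.sinh (s*x)) * hid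

lemma hd_tanh_sq' (s x : ℝ) : HasDerivAt (fun x => 2*s*Real.sinh (s*x)/Real.cosh (s*x)^3)
    (2*s^2*(Real.cosh (s*x)^2 - 3*Real.sinh (s*x)^2)/Real.cosh (s*x)^4) x := by
  have hlin : HasDerivAt (fun x : ℝ => s * x) s x := by
    simpa using (hasDerivAt_id x).const_mul s
  have hsinh := ((Real.hasDerivAt_sinh (s*x)).comp x hlin).const_mul (2*s)
  have hcosh := ((Real.hasDerivAt_cosh (s*x)).comp x hlin).pow 3
  have hv3 : Real.cosh (s*x)^3 ≠ 0 := pow_ne_zero _ (cosh_ne _)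
  have := hsinh.div hcosh hv3
  refine this.congr_deriv ?_
  simp only [Function.comp_apply, Pi.pow_apply]
  field_simp
  ring

lemma sech_sq_eq (s x : ℝ) : (1/Real.cosh (s*x))^2 = 1 - Real.tanh (s*x)^2 := by
  have hid := Real.cosh_sq_sub_sinh_sq (s*x)
  have hv := cosh_ne (s*x)
  rw [Real.tanh_eq_sinh_div_cosh]
  field_simp
  linarith

lemma hd_sech_sq (s x : ℝ) : HasDerivAt (fun x => (1/Real.cosh (s*x))^2)
    (-(2*s*Real.sinh (s*x)/Real.cosh (s*x)^3)) x := by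
  have h := (hd_tanh_sq s x).const_sub 1
  have he : (fun x => (1/Real.cosh (s*x))^2) = fun x => 1 - Real.tanh (s*x)^2 :=
    funext fun y => sech_sq_eq s y
  rw [he]; exact h

lemma hd_sech_sq' (s x : ℝ) : HasDerivAt (fun x => -(2*s*Real.sinh (s*x)/Real.cosh (s*x)^3))
    (-(2*s^2*(Real.cosh (s*x)^2 - 3*Real.sinh (s*x)^2)/Real.cosh (s*x)^4)) x :=
  (hd_tanh_sq' s x).neg

lemma dd_ofReal (g D1 D2 : ℝ → ℝ) (h1 : ∀ y, HasDerivAt g (D1 y) y)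
    (h2 : ∀ y, HasDerivAt D1 (D2 y) y) (x : ℝ) :
    deriv (deriv (fun y : ℝ => ((g y : ℝ) : ℂ))) x = ((D2 x : ℝ) : ℂ) := by
  have e1 : deriv (fun y : ℝ => ((g y : ℝ) : ℂ)) = fun y => ((D1 y : ℝ) : ℂ) :=
    funext fun y => ((h1 y).ofReal_comp).deriv
  rw [e1]
  exact ((h2 x).ofReal_comp).deriv

lemma phi_sq (ω : ℝ) (hω : 0 < ω) (x : ℝ) :
    (phi ω x)^2 = 2*ω*(1/Real.cosh (Real.sqrt ω * x))^2 := by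
  unfold phi
  rw [mul_pow, Real.sq_sqrt (by linarith)]

lemma tanh_le_tanh {a b : ℝ} (h : a ≤ b) : Real.tanh a ≤ Real.tanh b := by
  rw [Real.tanh_eq_sinh_div_cosh, Real.tanh_eq_sinh_div_cosh,
    div_le_div_iff₀ (Real.cosh_pos a) (Real.cosh_pos b)]
  have hs : 0 ≤ Real.sinh (b - a) := by
    rw [← Real.sinh_zero]
    exact (Real.sinh_le_sinh).mpr (by linarith)
  rw [Real.sinh_sub] at hs
  linarith

lemma tanh_one_pos : 0 < Real.tanh 1 := by
  rw [Real.tanh_eq_sinh_div_cosh]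
  exact div_pos (by rw [← Real.sinh_zero]; exact Real.sinh_lt_sinh.mpr one_pos) (Real.cosh_pos 1)

lemma not_memL2 (c s : ℝ) (hc : 0 < c) (hs : 0 < s) :
    ¬ MemLp (fun x : ℝ => ((c * Real.tanh (s*x)^2 : ℝ) : ℂ)) 2 (volume : Measure ℝ) := by
  intro h
  have hint := h.integrable_norm_rpow two_ne_zero ENNReal.ofNat_ne_top
  have hfin := hint.hasFiniteIntegral
  set a := c * Real.tanh 1 ^ 2 with ha
  have hapos : 0 < a := mul_pos hc (pow_pos tanh_one_pos 2)
  have hbound : ∀ x ∈ Set.Ici (1/s),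
      ENNReal.ofReal (a ^ ((2:ENNReal).toReal)) ≤
        (‖‖(fun x : ℝ => ((c * Real.tanh (s*x)^2 : ℝ) : ℂ)) x‖ ^ ((2:ENNReal).toReal)‖₊ : ENNReal) := by
    intro x hx
    have hsx : (1:ℝ) ≤ s * x := by
      rw [Set.mem_Ici] at hx
      calc (1:ℝ) = s * (1/s) := by field_simp
      _ ≤ s * x := by exact mul_le_mul_of_nonneg_left hx hs.le
    have ht1 : Real.tanh 1 ≤ Real.tanh (s*x) := tanh_le_tanh hsx
    have hfx : a ≤ ‖(((c * Real.tanh (s*x)^2 : ℝ)) : ℂ)‖ := by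
      rw [Complex.norm_real]
      have : a ≤ c * Real.tanh (s*x)^2 := by
        apply mul_le_mul_of_nonneg_left _ hc.le
        exact pow_le_pow_left₀ tanh_one_pos.le ht1 2
      exact this.trans (le_abs_self _)
    have hnn : (0:ℝ) ≤ ‖(((c * Real.tanh (s*x)^2 : ℝ)) : ℂ)‖ ^ ((2:ENNReal).toReal) :=
      Real.rpow_nonneg (norm_nonneg _) _
    exact le_trans (ENNReal.ofReal_le_ofReal (Real.rpow_le_rpow hapos.le hfx (by positivity)))
      (le_of_eq (Real.enorm_eq_ofReal hnn).symm)
  have htop : (⊤:ENNReal) ≤ ∫⁻ x, (‖‖(((c * Real.tanh (s*x)^2 : ℝ)) : ℂ)‖ ^ ((2:ENNReal).toReal)‖₊ : ENNReal) ∂volume := by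
    calc (⊤:ENNReal) = ENNReal.ofReal (a ^ ((2:ENNReal).toReal)) * volume (Set.Ici (1/s)) := by
          rw [Real.volume_Ici, ENNReal.mul_top (by positivity)]
      _ = ∫⁻ _ in Set.Ici (1/s), ENNReal.ofReal (a ^ ((2:ENNReal).toReal)) ∂volume :=
          (setLIntegral_const _ _).symm
      _ ≤ ∫⁻ x in Set.Ici (1/s), (‖‖(((c * Real.tanh (s*x)^2 : ℝ)) : ℂ)‖ ^ ((2:ENNReal).toReal)‖₊ : ENNReal) ∂volume :=
          setLIntegral_mono' measurableSet_Ici hbound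
      _ ≤ _ := setLIntegral_le_lintegral _ _
  exact absurd (lt_of_le_of_lt htop hfin) (lt_irrefl ⊤)

set_option maxHeartbeats 1000000 in
/-- The threshold resonances: H(ω)Φ_{±,ω} = ±ω Φ_{±,ω} pointwise, and neither
Φ_{+,ω} nor Φ_{-,ω} belongs to L²(ℝ)×L²(ℝ). -/
theorem threshold_resonances (ω : ℝ) (hω : 0 < ω) :
    (∀ x : ℝ, (Hop ω (PhiPlus ω)).1 x = (ω : ℂ) * (PhiPlus ω).1 x ∧
              (Hop ω (PhiPlus ω)).2 x = (ω : ℂ) * (PhiPlus ω).2 x) ∧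
    (∀ x : ℝ, (Hop ω (PhiMinus ω)).1 x = -(ω : ℂ) * (PhiMinus ω).1 x ∧
              (Hop ω (PhiMinus ω)).2 x = -(ω : ℂ) * (PhiMinus ω).2 x) ∧
    ¬ (MemLp (PhiPlus ω).1 2 (volume : Measure ℝ) ∧
       MemLp (PhiPlus ω).2 2 (volume : Measure ℝ)) ∧
    ¬ (MemLp (PhiMinus ω).1 2 (volume : Measure ℝ) ∧
       MemLp (PhiMinus ω).2 2 (volume : Measure ℝ)) := by
  have hs : 0 < Real.sqrt ω := Real.sqrt_pos.mpr hω
  have hs2 : Real.sqrt ω ^ 2 = ω := Real.sq_sqrt hω.le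
  have hc : 0 < 1 / Real.sqrt (2 * Real.pi) :=
    one_div_pos.mpr (Real.sqrt_pos.mpr (by positivity))
  set s := Real.sqrt ω with hsdef
  set c := 1 / Real.sqrt (2 * Real.pi) with hcdef
  -- second-derivative computations
  have ddT : ∀ x : ℝ, deriv (deriv (fun x : ℝ => ((c * Real.tanh (s*x)^2 : ℝ) : ℂ))) x
      = ((c * (2*s^2*(Real.cosh (s*x)^2 - 3*Real.sinh (s*x)^2)/Real.cosh (s*x)^4) : ℝ) : ℂ) :=
    fun x => dd_ofReal _ _ _ (fun y => (hd_tanh_sq s y).const_mul c)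
      (fun y => (hd_tanh_sq' s y).const_mul c) x
  have ddS : ∀ x : ℝ, deriv (deriv (fun x : ℝ => ((-c * (1/Real.cosh (s*x))^2 : ℝ) : ℂ))) x
      = ((-c * (-(2*s^2*(Real.cosh (s*x)^2 - 3*Real.sinh (s*x)^2)/Real.cosh (s*x)^4)) : ℝ) : ℂ) :=
    fun x => dd_ofReal _ _ _ (fun y => (hd_sech_sq s y).const_mul (-c))
      (fun y => (hd_sech_sq' s y).const_mul (-c)) x
  refine ⟨fun x => ⟨?_, ?_⟩, fun x => ⟨?_, ?_⟩, ?_, ?_⟩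
  · simp only [Hop, PhiPlus]
    rw [← hsdef, ← hcdef, ddT x, phi_sq ω hω x]
    have hvC : Complex.cosh ((s:ℂ)*(x:ℂ)) ≠ 0 := by
      rw [show ((s:ℂ)*(x:ℂ)) = ((s*x:ℝ):ℂ) by push_cast; ring, ← Complex.ofReal_cosh]
      exact Complex.ofReal_ne_zero.mpr (cosh_ne (s*x))
    have hidC := Complex.cosh_sq_sub_sinh_sq ((s:ℂ)*(x:ℂ))
    rw [← hs2, Real.tanh_eq_sinh_div_cosh, Real.sqrt_sq hs.le]
    push_cast
    field_simp
    linear_combination (-(2*(c:ℂ)*(s:ℂ)^2)) * hidC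
  · simp only [Hop, PhiPlus]
    rw [← hsdef, ← hcdef, ddS x, phi_sq ω hω x]
    have hvC : Complex.cosh ((s:ℂ)*(x:ℂ)) ≠ 0 := by
      rw [show ((s:ℂ)*(x:ℂ)) = ((s*x:ℝ):ℂ) by push_cast; ring, ← Complex.ofReal_cosh]
      exact Complex.ofReal_ne_zero.mpr (cosh_ne (s*x))
    have hidC := Complex.cosh_sq_sub_sinh_sq ((s:ℂ)*(x:ℂ))
    rw [← hs2, Real.tanh_eq_sinh_div_cosh, Real.sqrt_sq hs.le]
    push_cast
    field_simp
    linear_combination ((4:ℂ)*(c:ℂ)*(s:ℂ)^2) * hidC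
  · simp only [Hop, PhiMinus]
    rw [← hsdef, ← hcdef, ddS x, phi_sq ω hω x]
    have hvC : Complex.cosh ((s:ℂ)*(x:ℂ)) ≠ 0 := by
      rw [show ((s:ℂ)*(x:ℂ)) = ((s*x:ℝ):ℂ) by push_cast; ring, ← Complex.ofReal_cosh]
      exact Complex.ofReal_ne_zero.mpr (cosh_ne (s*x))
    have hidC := Complex.cosh_sq_sub_sinh_sq ((s:ℂ)*(x:ℂ))
    rw [← hs2, Real.tanh_eq_sinh_div_cosh, Real.sqrt_sq hs.le]
    push_cast
    field_simp
    linear_combination ((-4:ℂ)*(c:ℂ)*(s:ℂ)^2) * hidC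
  · simp only [Hop, PhiMinus]
    rw [← hsdef, ← hcdef, ddT x, phi_sq ω hω x]
    have hvC : Complex.cosh ((s:ℂ)*(x:ℂ)) ≠ 0 := by
      rw [show ((s:ℂ)*(x:ℂ)) = ((s*x:ℝ):ℂ) by push_cast; ring, ← Complex.ofReal_cosh]
      exact Complex.ofReal_ne_zero.mpr (cosh_ne (s*x))
    have hidC := Complex.cosh_sq_sub_sinh_sq ((s:ℂ)*(x:ℂ))
    rw [← hs2, Real.tanh_eq_sinh_div_cosh, Real.sqrt_sq hs.le]
    push_cast
    field_simp
    linear_combination ((2:ℂ)*(c:ℂ)*(s:ℂ)^2) * hidC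
  · rintro ⟨h1, -⟩
    exact not_memL2 c s hc hs h1
  · rintro ⟨-, h2⟩
    exact not_memL2 c s hc hs h2
end

section
/- For ω > 0 and every ξ ∈ ℝ, the functions Ψ_{+,ω}(x,ξ) = (Ψ_{1,ω}(x,ξ), Ψ_{2,ω}(x,ξ))ᵀ and Ψ_{-,ω}(x,ξ) = (Ψ_{2,ω}(x,ξ), Ψ_{1,ω}(x,ξ))ᵀ satisfy H(ω)Ψ_{+,ω}(·,ξ) = (ω+ξ²)Ψ_{+,ω}(·,ξ) and H(ω)Ψ_{-,ω}(·,ξ) = -(ω+ξ²)Ψ_{-,ω}(·,ξ) pointwise in x, where Ψ_{1,ω}(x,ξ) = (1/√(2π)) · (ξ + i√ω tanh(√ω x))²/(|ξ| - i√ω)² · e^{ixξ} and Ψ_{2,ω}(x,ξ) = (1/√(2π)) · ω sech²(√ω x)/(|ξ| - i√ω)² · e^{ixξ}. -/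
/-- First component of the distorted Fourier basis. -/
noncomputable def Psi1 (ω : ℝ) (x ξ : ℝ) : ℂ :=
  ((1 / Real.sqrt (2 * Real.pi) : ℝ) : ℂ) *
    (((ξ : ℂ) + Complex.I * (Real.sqrt ω : ℂ) * (Real.tanh (Real.sqrt ω * x) : ℂ)) ^ 2 /
      (((|ξ| : ℝ) : ℂ) - Complex.I * (Real.sqrt ω : ℂ)) ^ 2) *
    Complex.exp (Complex.I * (x : ℂ) * (ξ : ℂ))

/-- Second component of the distorted Fourier basis. -/
noncomputable def Psi2 (ω : ℝ) (x ξ : ℝ) : ℂ :=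
  ((1 / Real.sqrt (2 * Real.pi) : ℝ) : ℂ) *
    (((ω * (1 / Real.cosh (Real.sqrt ω * x)) ^ 2 : ℝ) : ℂ) /
      (((|ξ| : ℝ) : ℂ) - Complex.I * (Real.sqrt ω : ℂ)) ^ 2) *
    Complex.exp (Complex.I * (x : ℂ) * (ξ : ℂ))



open Complex

namespace DBaux

lemma csq {f : ℝ → ℂ} {f' : ℂ} {x : ℝ} (hf : HasDerivAt f f' x) :
    HasDerivAt (fun y => f y ^ 2) (2 * f x * f') x := by
  have h := hf.mul hf
  have heq : (fun y => f y * f y) = fun y => f y ^ 2 := by funext y; ring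
  simp only [Pi.mul_def] at h
  rw [heq] at h
  exact h.congr_deriv (by ring)

noncomputable def Tf (a x : ℝ) : ℂ := (Real.tanh (a * x) : ℂ)
noncomputable def Vf (a x : ℝ) : ℂ := ((1 / Real.cosh (a * x) : ℝ) : ℂ)
noncomputable def Ef (ξ x : ℝ) : ℂ := Complex.exp (Complex.I * x * ξ)
noncomputable def Kf (a ξ x : ℝ) : ℂ := (ξ : ℂ) + Complex.I * a * Tf a x
noncomputable def c0 (a ξ : ℝ) : ℂ :=
  ((1 / Real.sqrt (2 * Real.pi) : ℝ) : ℂ) / (((|ξ| : ℝ) : ℂ) - Complex.I * (a : ℂ)) ^ 2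

lemma cosh_ne (y : ℝ) : Real.cosh y ≠ 0 := (Real.cosh_pos y).ne'

lemma hasDerivAt_Tf (a x : ℝ) : HasDerivAt (Tf a) ((a : ℂ) * Vf a x ^ 2) x := by
  have hlin : HasDerivAt (fun y : ℝ => a * y) a x := by
    simpa using (hasDerivAt_id x).const_mul a
  have hs : HasDerivAt (fun y : ℝ => Real.sinh (a * y)) (Real.cosh (a * x) * a) x := hlin.sinh
  have hc : HasDerivAt (fun y : ℝ => Real.cosh (a * y)) (Real.sinh (a * x) * a) x := hlin.cosh
  have hq := hs.div hc (cosh_ne (a * x))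
  have hfun : (fun y : ℝ => Real.sinh (a * y) / Real.cosh (a * y)) = fun y => Real.tanh (a * y) := by
    funext y; rw [Real.tanh_eq_sinh_div_cosh]
  simp only [Pi.div_def] at hq
  rw [hfun] at hq
  have hre : HasDerivAt (fun y : ℝ => Real.tanh (a * y)) (a * (1 / Real.cosh (a * x)) ^ 2) x := by
    refine hq.congr_deriv ?_
    have h1 := Real.cosh_sq_sub_sinh_sq (a * x)
    have h2 := cosh_ne (a * x)
    field_simp
    linear_combination a * h1
  have h := hre.ofReal_comp
  have hfun2 : (fun y : ℝ => ((Real.tanh (a * y) : ℝ) : ℂ)) = Tf a := by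
    funext y; rfl
  rw [hfun2] at h
  refine h.congr_deriv ?_
  simp only [Vf]
  push_cast
  ring

lemma hasDerivAt_Vf (a x : ℝ) : HasDerivAt (Vf a) (-(a : ℂ) * Tf a x * Vf a x) x := by
  have hlin : HasDerivAt (fun y : ℝ => a * y) a x := by
    simpa using (hasDerivAt_id x).const_mul a
  have hc : HasDerivAt (fun y : ℝ => Real.cosh (a * y)) (Real.sinh (a * x) * a) x := hlin.cosh
  have hinv := hc.inv (cosh_ne (a * x))
  have hre : HasDerivAt (fun y : ℝ => 1 / Real.cosh (a * y))
      (-(a * Real.tanh (a * x) * (1 / Real.cosh (a * x)))) x := by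
    have hfun : (fun y : ℝ => (Real.cosh (a * y))⁻¹) = fun y => 1 / Real.cosh (a * y) := by
      funext y; rw [one_div]
    simp only [Pi.inv_def] at hinv
    rw [hfun] at hinv
    refine hinv.congr_deriv ?_
    rw [Real.tanh_eq_sinh_div_cosh]
    have h2 := cosh_ne (a * x)
    field_simp
  have h := hre.ofReal_comp
  have hfun2 : (fun y : ℝ => ((1 / Real.cosh (a * y) : ℝ) : ℂ)) = Vf a := by
    funext y; rfl
  rw [hfun2] at h
  refine h.congr_deriv ?_
  simp only [Tf, Vf]
  push_cast
  ring

lemma hasDerivAt_Ef (ξ x : ℝ) : HasDerivAt (Ef ξ) (Complex.I * ξ * Ef ξ x) x := by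
  have hid : HasDerivAt (fun y : ℝ => (y : ℂ)) 1 x := by
    simpa using (hasDerivAt_id x).ofReal_comp
  have hlin : HasDerivAt (fun y : ℝ => Complex.I * (y : ℂ) * (ξ : ℂ)) (Complex.I * ξ) x := by
    have := (hid.const_mul Complex.I).mul_const (ξ : ℂ)
    simpa using this
  have h := hlin.cexp
  refine h.congr_deriv ?_
  simp only [Ef]
  ring

lemma hasDerivAt_Kf (a ξ x : ℝ) :
    HasDerivAt (Kf a ξ) (Complex.I * (a : ℂ) ^ 2 * Vf a x ^ 2) x := by
  have h := ((hasDerivAt_Tf a x).const_mul (Complex.I * (a : ℂ))).const_add (ξ : ℂ)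
  have hfun : (fun y : ℝ => (ξ : ℂ) + Complex.I * (a : ℂ) * Tf a y) = Kf a ξ := by
    funext y; rfl
  rw [hfun] at h
  exact h.congr_deriv (by ring)

noncomputable def P1 (a ξ x : ℝ) : ℂ := c0 a ξ * (Kf a ξ x ^ 2 * Ef ξ x)
noncomputable def Q1 (a ξ x : ℝ) : ℂ :=
  c0 a ξ * ((2 * Complex.I * (a : ℂ) ^ 2 * Vf a x ^ 2 * Kf a ξ x
    + Complex.I * (ξ : ℂ) * Kf a ξ x ^ 2) * Ef ξ x)
noncomputable def R1 (a ξ x : ℝ) : ℂ :=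
  c0 a ξ * ((-4 * Complex.I * (a : ℂ) ^ 3 * Tf a x * Vf a x ^ 2 * Kf a ξ x
    - 2 * (a : ℂ) ^ 4 * Vf a x ^ 4
    - 4 * (ξ : ℂ) * (a : ℂ) ^ 2 * Vf a x ^ 2 * Kf a ξ x
    - (ξ : ℂ) ^ 2 * Kf a ξ x ^ 2) * Ef ξ x)

noncomputable def P2 (a ξ x : ℝ) : ℂ := c0 a ξ * ((a : ℂ) ^ 2 * Vf a x ^ 2 * Ef ξ x)
noncomputable def Q2 (a ξ x : ℝ) : ℂ :=
  c0 a ξ * ((-2 * (a : ℂ) ^ 3 * Tf a x * Vf a x ^ 2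
    + Complex.I * (ξ : ℂ) * (a : ℂ) ^ 2 * Vf a x ^ 2) * Ef ξ x)
noncomputable def R2 (a ξ x : ℝ) : ℂ :=
  c0 a ξ * ((-2 * (a : ℂ) ^ 4 * Vf a x ^ 4 + 4 * (a : ℂ) ^ 4 * Tf a x ^ 2 * Vf a x ^ 2
    - 4 * Complex.I * (ξ : ℂ) * (a : ℂ) ^ 3 * Tf a x * Vf a x ^ 2
    - (ξ : ℂ) ^ 2 * (a : ℂ) ^ 2 * Vf a x ^ 2) * Ef ξ x)

lemma hasDerivAt_P1 (a ξ x : ℝ) : HasDerivAt (P1 a ξ) (Q1 a ξ x) x := by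
  have hK2 := csq (hasDerivAt_Kf a ξ x)
  have h := (hK2.mul (hasDerivAt_Ef ξ x)).const_mul (c0 a ξ)
  have hfun : (fun y : ℝ => c0 a ξ * (Kf a ξ y ^ 2 * Ef ξ y)) = P1 a ξ := by
    funext y; rfl
  simp only [Pi.mul_def] at h
  rw [hfun] at h
  exact h.congr_deriv (by simp only [Q1]; ring)

lemma hasDerivAt_Q1 (a ξ x : ℝ) : HasDerivAt (Q1 a ξ) (R1 a ξ x) x := by
  have hA := ((csq (hasDerivAt_Vf a x)).const_mul
      (2 * Complex.I * (a : ℂ) ^ 2)).mul (hasDerivAt_Kf a ξ x)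
  have hB := (csq (hasDerivAt_Kf a ξ x)).const_mul (Complex.I * (ξ : ℂ))
  have h := ((hA.add hB).mul (hasDerivAt_Ef ξ x)).const_mul (c0 a ξ)
  have hfun : (fun y : ℝ => c0 a ξ * ((2 * Complex.I * (a : ℂ) ^ 2 * Vf a y ^ 2 * Kf a ξ y
      + Complex.I * (ξ : ℂ) * Kf a ξ y ^ 2) * Ef ξ y)) = Q1 a ξ := by
    funext y; rfl
  simp only [Pi.mul_def, Pi.add_def] at h
  rw [hfun] at h
  refine h.congr_deriv ?_
  simp only [R1]
  linear_combination (4 * c0 a ξ * (a : ℂ) ^ 2 * Vf a x ^ 2 * Kf a ξ x * (ξ : ℂ) * Ef ξ x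
    + 2 * c0 a ξ * (a : ℂ) ^ 4 * Vf a x ^ 4 * Ef ξ x
    + c0 a ξ * Kf a ξ x ^ 2 * (ξ : ℂ) ^ 2 * Ef ξ x) * Complex.I_sq

lemma hasDerivAt_P2 (a ξ x : ℝ) : HasDerivAt (P2 a ξ) (Q2 a ξ x) x := by
  have h := (((csq (hasDerivAt_Vf a x)).const_mul ((a : ℂ) ^ 2)).mul
      (hasDerivAt_Ef ξ x)).const_mul (c0 a ξ)
  have hfun : (fun y : ℝ => c0 a ξ * ((a : ℂ) ^ 2 * Vf a y ^ 2 * Ef ξ y)) = P2 a ξ := by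
    funext y; rfl
  simp only [Pi.mul_def] at h
  rw [hfun] at h
  exact h.congr_deriv (by simp only [Q2]; ring)

lemma hasDerivAt_Q2 (a ξ x : ℝ) : HasDerivAt (Q2 a ξ) (R2 a ξ x) x := by
  have hA := ((hasDerivAt_Tf a x).mul (csq (hasDerivAt_Vf a x))).const_mul
      (-2 * (a : ℂ) ^ 3)
  have hB := (csq (hasDerivAt_Vf a x)).const_mul (Complex.I * (ξ : ℂ) * (a : ℂ) ^ 2)
  have h := ((hA.add hB).mul (hasDerivAt_Ef ξ x)).const_mul (c0 a ξ)
  have hfun : (fun y : ℝ => c0 a ξ * ((-2 * (a : ℂ) ^ 3 * (Tf a y * Vf a y ^ 2)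
      + Complex.I * (ξ : ℂ) * (a : ℂ) ^ 2 * Vf a y ^ 2) * Ef ξ y)) = Q2 a ξ := by
    funext y; simp only [Q2]; ring
  simp only [Pi.mul_def, Pi.add_def] at h
  rw [hfun] at h
  refine h.congr_deriv ?_
  simp only [R2]
  linear_combination (c0 a ξ * (a : ℂ) ^ 2 * Vf a x ^ 2 * (ξ : ℂ) ^ 2 * Ef ξ x) * Complex.I_sq

lemma deriv2_P1 (a ξ x : ℝ) : deriv (deriv (P1 a ξ)) x = R1 a ξ x := by
  have h1 : deriv (P1 a ξ) = Q1 a ξ := funext fun y => (hasDerivAt_P1 a ξ y).deriv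
  rw [h1]; exact (hasDerivAt_Q1 a ξ x).deriv

lemma deriv2_P2 (a ξ x : ℝ) : deriv (deriv (P2 a ξ)) x = R2 a ξ x := by
  have h1 : deriv (P2 a ξ) = Q2 a ξ := funext fun y => (hasDerivAt_P2 a ξ y).deriv
  rw [h1]; exact (hasDerivAt_Q2 a ξ x).deriv

lemma tv_sq (a x : ℝ) : Tf a x ^ 2 + Vf a x ^ 2 = 1 := by
  have h1 := Real.cosh_sq_sub_sinh_sq (a * x)
  have h2 := cosh_ne (a * x)
  have key : Real.tanh (a * x) ^ 2 + (1 / Real.cosh (a * x)) ^ 2 = 1 := by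
    rw [Real.tanh_eq_sinh_div_cosh]
    field_simp
    linear_combination -h1
  calc Tf a x ^ 2 + Vf a x ^ 2
      = ((Real.tanh (a * x) ^ 2 + (1 / Real.cosh (a * x)) ^ 2 : ℝ) : ℂ) := by
        push_cast [Tf, Vf]; ring
    _ = 1 := by rw [key]; norm_num

end DBaux

lemma Psi1_eq (ω ξ x : ℝ) : Psi1 ω x ξ = DBaux.P1 (Real.sqrt ω) ξ x := by
  simp only [Psi1, DBaux.P1, DBaux.c0, DBaux.Kf, DBaux.Tf, DBaux.Ef]
  ring

lemma Psi2_eq (ω : ℝ) (hω : 0 ≤ ω) (ξ x : ℝ) : Psi2 ω x ξ = DBaux.P2 (Real.sqrt ω) ξ x := by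
  have ha : ((Real.sqrt ω : ℝ) : ℂ) ^ 2 = ((ω : ℝ) : ℂ) := by
    norm_cast
    exact Real.sq_sqrt hω
  simp only [Psi2, DBaux.P2, DBaux.c0, DBaux.Vf, DBaux.Ef]
  push_cast
  rw [← ha]
  ring

/-- The distorted Fourier basis elements Ψ_{±,ω}(·,ξ) are generalized eigenfunctions:
H(ω)Ψ_{+,ω}(·,ξ) = (ω+ξ²)Ψ_{+,ω}(·,ξ) and H(ω)Ψ_{-,ω}(·,ξ) = -(ω+ξ²)Ψ_{-,ω}(·,ξ). -/
theorem distorted_basis_eigenfunctions (ω : ℝ) (hω : 0 < ω) (ξ : ℝ) :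
    (∀ x : ℝ,
      (Hop ω (fun y => Psi1 ω y ξ, fun y => Psi2 ω y ξ)).1 x
        = ((ω + ξ ^ 2 : ℝ) : ℂ) * Psi1 ω x ξ ∧
      (Hop ω (fun y => Psi1 ω y ξ, fun y => Psi2 ω y ξ)).2 x
        = ((ω + ξ ^ 2 : ℝ) : ℂ) * Psi2 ω x ξ) ∧
    (∀ x : ℝ,
      (Hop ω (fun y => Psi2 ω y ξ, fun y => Psi1 ω y ξ)).1 x
        = -((ω + ξ ^ 2 : ℝ) : ℂ) * Psi2 ω x ξ ∧
      (Hop ω (fun y => Psi2 ω y ξ, fun y => Psi1 ω y ξ)).2 x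
        = -((ω + ξ ^ 2 : ℝ) : ℂ) * Psi1 ω x ξ) := by
  classical
  have h0 : (0:ℝ) ≤ ω := hω.le
  have ha : ((Real.sqrt ω : ℝ) : ℂ) ^ 2 = ((ω : ℝ) : ℂ) := by
    norm_cast
    exact Real.sq_sqrt h0
  have hfun1 : (fun y => Psi1 ω y ξ) = DBaux.P1 (Real.sqrt ω) ξ :=
    funext fun y => Psi1_eq ω ξ y
  have hfun2 : (fun y => Psi2 ω y ξ) = DBaux.P2 (Real.sqrt ω) ξ :=
    funext fun y => Psi2_eq ω h0 ξ y
  have hphi : ∀ z : ℝ, ((phi ω z ^ 2 : ℝ) : ℂ)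
      = 2 * ((Real.sqrt ω : ℝ) : ℂ) ^ 2 * DBaux.Vf (Real.sqrt ω) z ^ 2 := by
    intro z
    have h2 : Real.sqrt (2 * ω) ^ 2 = 2 * ω := Real.sq_sqrt (by linarith)
    have h3 : Real.sqrt ω ^ 2 = ω := Real.sq_sqrt h0
    have hre : (phi ω z) ^ 2
        = 2 * (Real.sqrt ω) ^ 2 * (1 / Real.cosh (Real.sqrt ω * z)) ^ 2 := by
      simp only [phi]
      rw [mul_pow, h2, h3]
    rw [hre]
    simp only [DBaux.Vf]
    push_cast
    ring
  refine ⟨fun x => ⟨?_, ?_⟩, fun x => ⟨?_, ?_⟩⟩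
  · simp only [Hop]
    rw [hfun1, Psi1_eq ω ξ x, Psi2_eq ω h0 ξ x, hphi x,
      DBaux.deriv2_P1 (Real.sqrt ω) ξ x]
    push_cast
    rw [← ha]
    simp only [DBaux.P1, DBaux.P2, DBaux.R1, DBaux.Kf]
    ring
  · simp only [Hop]
    rw [hfun2, Psi1_eq ω ξ x, Psi2_eq ω h0 ξ x, hphi x,
      DBaux.deriv2_P2 (Real.sqrt ω) ξ x]
    push_cast
    rw [← ha]
    simp only [DBaux.P1, DBaux.P2, DBaux.R2, DBaux.Kf]
    linear_combination
      (2 * ((Real.sqrt ω : ℝ) : ℂ) ^ 4 * DBaux.Vf (Real.sqrt ω) x ^ 2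
        * DBaux.c0 (Real.sqrt ω) ξ * DBaux.Ef ξ x) * DBaux.tv_sq (Real.sqrt ω) x
      + (2 * ((Real.sqrt ω : ℝ) : ℂ) ^ 4 * DBaux.Tf (Real.sqrt ω) x ^ 2
        * DBaux.Vf (Real.sqrt ω) x ^ 2
        * DBaux.c0 (Real.sqrt ω) ξ * DBaux.Ef ξ x) * Complex.I_sq
  · simp only [Hop]
    rw [hfun2, Psi1_eq ω ξ x, Psi2_eq ω h0 ξ x, hphi x,
      DBaux.deriv2_P2 (Real.sqrt ω) ξ x]
    push_cast
    rw [← ha]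
    simp only [DBaux.P1, DBaux.P2, DBaux.R2, DBaux.Kf]
    linear_combination
      (-2 * ((Real.sqrt ω : ℝ) : ℂ) ^ 4 * DBaux.Vf (Real.sqrt ω) x ^ 2
        * DBaux.c0 (Real.sqrt ω) ξ * DBaux.Ef ξ x) * DBaux.tv_sq (Real.sqrt ω) x
      + (-2 * ((Real.sqrt ω : ℝ) : ℂ) ^ 4 * DBaux.Tf (Real.sqrt ω) x ^ 2
        * DBaux.Vf (Real.sqrt ω) x ^ 2
        * DBaux.c0 (Real.sqrt ω) ξ * DBaux.Ef ξ x) * Complex.I_sq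
  · simp only [Hop]
    rw [hfun1, Psi1_eq ω ξ x, Psi2_eq ω h0 ξ x, hphi x,
      DBaux.deriv2_P1 (Real.sqrt ω) ξ x]
    push_cast
    rw [← ha]
    simp only [DBaux.P1, DBaux.P2, DBaux.R1, DBaux.Kf]
    ring
end
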